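/- arXiv:1907.07828 — 2 statements merged into one kernel-verified Lean document; each statement's English description precedes it below -/
import Mathlib

section
/- Let G be a finite nontrivial group in which any two distinct conjugacy classes have distinct cardinalities. Then G is a rational group, i.e., for every g in G, all generators of the cyclic subgroup generated by g are conjugate in G. -/
/-!
The size of the conjugacy class of `g` is the index of its centralizer, and two generators of the
same cyclic subgroup have the same centralizer; so their classes have equal size, and the
hypothesis makes them conjugate.
-/

open MulAction Subgroup

theorem stabilizer_conjAct_le_of_mem_zpowers {G : Type*} [Group G] {g h : G}
    (hh : h ∈ zpowers g) : stabilizer (ConjAct G) g ≤ stabilizer (ConjAct G) h := by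
  obtain ⟨k, rfl⟩ := hh
  intro c hc
  rw [mem_stabilizer_iff] at hc ⊢
  rw [smul_zpow', hc]

theorem card_conjClass_eq_of_zpowers_eq {G : Type*} [Group G] {g h : G}
    (hgh : zpowers g = zpowers h) :
    Nat.card {x : G | IsConj g x} = Nat.card {x : G | IsConj h x} := by
  have hclass : ∀ a : G, {x : G | IsConj a x} = orbit (ConjAct G) a := fun a => by
    ext x; exact isConj_comm.trans ConjAct.mem_orbit_conjAct.symm
  have hstab : stabilizer (ConjAct G) g = stabilizer (ConjAct G) h :=
    (stabilizer_conjAct_le_of_mem_zpowers (hgh ▸ mem_zpowers h)).antisymm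
      (stabilizer_conjAct_le_of_mem_zpowers (hgh ▸ mem_zpowers g))
  rw [hclass, hclass, Nat.card_coe_set_eq, Nat.card_coe_set_eq, ← index_stabilizer,
    ← index_stabilizer, hstab]

theorem stmt0_general (G : Type*) [Group G]
    (hdist : ∀ g h : G, Nat.card {x : G | IsConj g x} = Nat.card {x : G | IsConj h x} → IsConj g h) :
    ∀ g h : G, Subgroup.zpowers h = Subgroup.zpowers g → IsConj g h :=
  fun g h hgh => hdist g h (card_conjClass_eq_of_zpowers_eq hgh.symm)

theorem stmt0 (G : Type*) [Group G] [Finite G] [Nontrivial G]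
    (hdist : ∀ g h : G, Nat.card {x : G | IsConj g x} = Nat.card {x : G | IsConj h x} → IsConj g h) :
    ∀ g h : G, Subgroup.zpowers h = Subgroup.zpowers g → IsConj g h :=
  stmt0_general G hdist
end

section
/- Let G be a finite group in which any two distinct conjugacy classes have distinct cardinalities. If g₁, g₂ ∈ G generate the same cyclic subgroup, then g₁ and g₂ are conjugate in G. -/
theorem stmt1 (G : Type*) [Group G] [Finite G]
    (hdist : ∀ g h : G, Nat.card {x : G | IsConj g x} = Nat.card {x : G | IsConj h x} → IsConj g h)
    (g₁ g₂ : G) (h : Subgroup.zpowers g₁ = Subgroup.zpowers g₂) : IsConj g₁ g₂ := by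
  apply hdist
  have hset : ∀ g : G, {x : G | IsConj g x} = MulAction.orbit (ConjAct G) g := by
    intro g
    ext x
    rw [Set.mem_setOf_eq, ConjAct.mem_orbit_conjAct]; exact isConj_comm
  have hstab : MulAction.stabilizer (ConjAct G) g₁ = MulAction.stabilizer (ConjAct G) g₂ := by
    rw [ConjAct.stabilizer_eq_centralizer, ConjAct.stabilizer_eq_centralizer]
    rw [← Subgroup.centralizer_closure {ConjAct.toConjAct g₁}, ← Subgroup.centralizer_closure {ConjAct.toConjAct g₂},
      ← Subgroup.zpowers_eq_closure, ← Subgroup.zpowers_eq_closure]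
    congr 1
    have : Subgroup.zpowers (ConjAct.toConjAct g₁) = Subgroup.zpowers (ConjAct.toConjAct g₂) := by
      have h1 := MonoidHom.map_zpowers (ConjAct.toConjAct (G := G)).toMonoidHom g₁
      have h2 := MonoidHom.map_zpowers (ConjAct.toConjAct (G := G)).toMonoidHom g₂
      simp only [MulEquiv.coe_toMonoidHom] at h1 h2
      rw [← h1, ← h2, h]
    exact congrArg _ this
  rw [hset, hset]
  rw [Nat.card_eq_of_bijective _ (MulAction.orbitEquivQuotientStabilizer (ConjAct G) g₁).bijective,
    Nat.card_eq_of_bijective _ (MulAction.orbitEquivQuotientStabilizer (ConjAct G) g₂).bijective,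
    hstab]
end
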